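/- arXiv:2402.08291 — 4 statements merged into one kernel-verified Lean document; each statement's English description precedes it below -/
import Mathlib

section
/- With the notation above, the Fourier coefficients of a piecewise constant function $u_h$ on a uniform mesh of $n$ elements satisfy $\overline{u}_{k+2\mu n} = \frac{2k+1}{2k+1+4\mu n}\,\overline{u}_k$ for all $k \in \{0,\dots,2n-1\}$ and all $\mu \in \mathbb{N}$. -/
open Real Finset MeasureTheory

/-!
On the `i`-th cell `u_h` is constant, so `c * ∫ u_h(t) cos (c t / T) dt` is `T` times a combination
of the values `sin (c i / n)`. Raising `k` by `2 μ n` raises the frequency `c = (k + 1/2) π` by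
`2 π μ n`, which moves every `c i / n` by a multiple of `2 π`; hence `c * ū_k` does not depend on
that shift, and the ratio of the two frequencies is `(2k + 1) / (2k + 1 + 4 μ n)`.
-/

theorem intervalIntegral_indicator_Ioo {E : Type*} [NormedAddCommGroup E] [NormedSpace ℝ E]
    {f : ℝ → E} {s a b T : ℝ} (hsa : s ≤ a) (hab : a ≤ b) (hbT : b ≤ T) :
    ∫ t in s..T, (Set.Ioo a b).indicator f t = ∫ t in a..b, f t := by
  have hsub : Set.Ioo a b ⊆ Set.Ioc s T := fun t ht => ⟨hsa.trans_lt ht.1, ht.2.le.trans hbT⟩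
  rw [intervalIntegral.integral_of_le (hsa.trans (hab.trans hbT)),
    integral_indicator measurableSet_Ioo, Measure.restrict_restrict measurableSet_Ioo,
    Set.inter_eq_self_of_subset_left hsub,
    intervalIntegral.integral_of_le hab, integral_Ioc_eq_integral_Ioo]

theorem mul_integral_cos_mul_div {T : ℝ} (hT : T ≠ 0) (c a b : ℝ) :
    c * ∫ t in a..b, cos (c * t / T) = T * (sin (c * b / T) - sin (c * a / T)) := by
  have hderiv (t : ℝ) : HasDerivAt (fun t => T * sin (c * t / T)) (c * cos (c * t / T)) t := by
    refine (((hasDerivAt_id t).const_mul c).div_const T).sin.const_mul T |>.congr_deriv ?_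
    simp only [id, mul_one]
    field_simp
  rw [← intervalIntegral.integral_const_mul,
    intervalIntegral.integral_eq_sub_of_hasDerivAt (fun t _ => hderiv t)
      ((by fun_prop : Continuous _).intervalIntegrable _ _)]
  ring

noncomputable def uniformStep (T : ℝ) (n : ℕ) (u : ℕ → ℝ) (t : ℝ) : ℝ :=
  ∑ i ∈ Icc 1 n, u i * (Set.Ioo (((i : ℝ) - 1) * (T / n)) ((i : ℝ) * (T / n))).indicator 1 t

theorem mul_integral_uniformStep_mul_cos {T : ℝ} (hT : 0 < T) (n : ℕ) (u : ℕ → ℝ) (c : ℝ) :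
    c * ∫ t in (0 : ℝ)..T, uniformStep T n u t * cos (c * t / T)
      = T * ∑ i ∈ Icc 1 n, u i * (sin (c * i / n) - sin (c * ((i : ℝ) - 1) / n)) := by
  set cell : ℕ → Set ℝ := fun i => Set.Ioo (((i : ℝ) - 1) * (T / n)) ((i : ℝ) * (T / n))
  have hterm (i : ℕ) (t : ℝ) :
      u i * (cell i).indicator 1 t * cos (c * t / T)
        = (cell i).indicator (fun t => u i * cos (c * t / T)) t := by
    by_cases ht : t ∈ cell i <;> simp [ht]
  have hcell (i : ℕ) (hi : i ∈ Icc 1 n) :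
      c * ∫ t in (0 : ℝ)..T, (cell i).indicator (fun t => u i * cos (c * t / T)) t
        = T * (u i * (sin (c * i / n) - sin (c * ((i : ℝ) - 1) / n))) := by
    obtain ⟨hi1, hin⟩ := mem_Icc.mp hi
    have hn : (0 : ℝ) < n := by exact_mod_cast hi1.trans hin
    have hh : 0 < T / n := div_pos hT hn
    have hi1' : (1 : ℝ) ≤ i := by exact_mod_cast hi1
    have hin' : (i : ℝ) ≤ n := by exact_mod_cast hin
    rw [intervalIntegral_indicator_Ioo (by positivity) (by nlinarith)
        (by rwa [← le_div_iff₀ hh, div_div_cancel₀ hT.ne']),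
      intervalIntegral.integral_const_mul, mul_left_comm, mul_integral_cos_mul_div hT.ne']
    field_simp
  have hint (i : ℕ) : IntervalIntegrable
      (fun t => u i * (cell i).indicator 1 t * cos (c * t / T)) volume 0 T := by
    simp_rw [hterm, intervalIntegrable_iff_integrableOn_Ioc_of_le hT.le]
    exact (Continuous.integrableOn_Ioc (by fun_prop)).indicator measurableSet_Ioo
  simp_rw [uniformStep, sum_mul]
  rw [intervalIntegral.integral_finsetSum fun i _ => hint i, mul_sum, mul_sum]
  refine sum_congr rfl fun i hi => ?_
  simp_rw [hterm]
  exact hcell i hi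

theorem mul_integral_uniformStep_mul_cos_add {T : ℝ} (hT : 0 < T) (n : ℕ) (u : ℕ → ℝ) (c : ℝ)
    (m : ℤ) :
    (c + m * n * (2 * π)) * ∫ t in (0 : ℝ)..T,
        uniformStep T n u t * cos ((c + m * n * (2 * π)) * t / T)
      = c * ∫ t in (0 : ℝ)..T, uniformStep T n u t * cos (c * t / T) := by
  rw [mul_integral_uniformStep_mul_cos hT, mul_integral_uniformStep_mul_cos hT]
  rcases eq_or_ne n 0 with rfl | hn
  · simp
  have hsin (x : ℤ) : sin ((c + m * n * (2 * π)) * x / n) = sin (c * x / n) := by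
    rw [← sin_add_int_mul_two_pi (c * x / n) (m * x)]
    congr 1
    push_cast
    field_simp
  congr 1
  refine sum_congr rfl fun i _ => ?_
  have hi := hsin i
  have hi' := hsin (i - 1)
  push_cast at hi hi'
  rw [hi, hi']

theorem fourier_coeff_shift_general (T : ℝ) (hT : 0 < T) (n : ℕ)
    (u : ℕ → ℝ)
    (uh : ℝ → ℝ)
    (huh : uh = fun t => ∑ i ∈ Finset.Icc 1 n,
      u i * Set.indicator (Set.Ioo (((i : ℝ) - 1) * (T / n)) ((i : ℝ) * (T / n))) 1 t)
    (ubar : ℕ → ℝ)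
    (hubar : ∀ k, ubar k = (2 / T) * ∫ t in (0 : ℝ)..T, uh t * Real.cos ((π / 2 + k * π) * t / T))
    (k : ℕ) (μ : ℕ) :
    ubar (k + 2 * μ * n) = (2 * (k : ℝ) + 1) / (2 * k + 1 + 4 * μ * n) * ubar k := by
  obtain rfl : uh = uniformStep T n u := huh
  have hfreq : π / 2 + ((k + 2 * μ * n : ℕ) : ℝ) * π
      = (π / 2 + k * π) + ((μ : ℤ) : ℝ) * n * (2 * π) := by
    push_cast
    ring
  have hshift := mul_integral_uniformStep_mul_cos_add hT n u (π / 2 + k * π) μ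
  rw [hubar, hubar, hfreq]
  set I := ∫ t in (0 : ℝ)..T, uniformStep T n u t * cos ((π / 2 + k * π) * t / T)
  set I' := ∫ t in (0 : ℝ)..T,
    uniformStep T n u t * cos ((π / 2 + k * π + ((μ : ℤ) : ℝ) * n * (2 * π)) * t / T)
  have hI' : (2 * k + 1 + 4 * μ * n) * I' = (2 * k + 1) * I :=
    mul_left_cancel₀ pi_ne_zero (by push_cast at hshift; linear_combination 2 * hshift)
  have hpos : 0 < 2 * (k : ℝ) + 1 + 4 * μ * n := by positivity
  field_simp
  linear_combination hI'

theorem fourier_coeff_shift (T : ℝ) (hT : 0 < T) (n : ℕ) (hn : 1 ≤ n)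
    (u : ℕ → ℝ)
    (uh : ℝ → ℝ)
    (huh : uh = fun t => ∑ i ∈ Finset.Icc 1 n,
      u i * Set.indicator (Set.Ioo (((i : ℝ) - 1) * (T / n)) ((i : ℝ) * (T / n))) 1 t)
    (ubar : ℕ → ℝ)
    (hubar : ∀ k, ubar k = (2 / T) * ∫ t in (0 : ℝ)..T, uh t * Real.cos ((π / 2 + k * π) * t / T))
    (k : ℕ) (hk : k ≤ 2 * n - 1) (μ : ℕ) (hμ : 1 ≤ μ) :
    ubar (k + 2 * μ * n) = (2 * (k : ℝ) + 1) / (2 * k + 1 + 4 * μ * n) * ubar k :=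
  fourier_coeff_shift_general T hT n u uh huh ubar hubar k μ
end

section
/- With the notation above, the Fourier coefficients of a piecewise constant function $u_h$ on a uniform mesh of $n$ elements satisfy $\overline{u}_{2n-1-k} = -\frac{2k+1}{4n-1-2k}\,\overline{u}_k$ for all $k \in \{0,\dots,n-1\}$. -/
/-!
Integrating the step function against `cos (c * t)` cell by cell gives
`c * ∫ u_h cos (c t) = ∑ᵢ uᵢ (sin (c tᵢ) - sin (c tᵢ₋₁))`, which only sees the values of
`sin (c ·)` at the mesh nodes `tᵢ = i h`. The frequencies `c` and `c'` of the modes `k` and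
`2n - 1 - k` satisfy `c + c' = 2π / h`, so `sin (c' tᵢ) = -sin (c tᵢ)` at every node (aliasing)
and hence `c' ū_{2n-1-k} = -c ū_k`, with `c / c' = (2k + 1) / (4n - 1 - 2k)`.
-/

open Real Finset MeasureTheory

lemma intervalIntegral_indicator_one_mul {a b s e : ℝ} (f : ℝ → ℝ) (has : a ≤ s) (hse : s ≤ e)
    (heb : e ≤ b) :
    ∫ t in a..b, (Set.Ioo s e).indicator 1 t * f t = ∫ t in s..e, f t := by
  simp_rw [← Set.indicator_mul_left, Pi.one_apply, one_mul]
  rw [intervalIntegral.integral_of_le (has.trans (hse.trans heb)),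
    setIntegral_indicator measurableSet_Ioo,
    Set.inter_eq_self_of_subset_right (Set.Ioo_subset_Ioc_self.trans (Set.Ioc_subset_Ioc has heb)),
    intervalIntegral.integral_of_le hse, integral_Ioc_eq_integral_Ioo]

lemma mul_integral_cos_mul (c s e : ℝ) :
    c * ∫ t in s..e, cos (c * t) = sin (c * e) - sin (c * s) := by
  rw [intervalIntegral.mul_integral_comp_mul_left, integral_cos]

noncomputable def stepFunction (h : ℝ) (n : ℕ) (u : ℕ → ℝ) (t : ℝ) : ℝ :=
  ∑ i ∈ Icc 1 n, u i * (Set.Ioo (((i : ℝ) - 1) * h) (i * h)).indicator 1 t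

lemma intervalIntegrable_indicator_one_mul {g : ℝ → ℝ} (hg : Continuous g) (s e a b : ℝ) :
    IntervalIntegrable (fun t ↦ (Set.Ioo s e).indicator 1 t * g t) volume a b :=
  (intervalIntegrable_iff.2 ((integrableOn_const (by simp)).indicator measurableSet_Ioo))
    |>.mul_continuousOn hg.continuousOn

lemma mul_integral_stepFunction_mul_cos {h : ℝ} (hh : 0 ≤ h) (n : ℕ) (u : ℕ → ℝ) (c : ℝ) :
    c * ∫ t in 0..n * h, stepFunction h n u t * cos (c * t) =
      ∑ i ∈ Icc 1 n, u i * (sin (c * (i * h)) - sin (c * ((i - 1) * h))) := by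
  simp_rw [stepFunction, sum_mul, mul_assoc]
  rw [intervalIntegral.integral_finsetSum
    fun i _ ↦ (intervalIntegrable_indicator_one_mul (by fun_prop) _ _ _ _).const_mul _, mul_sum]
  refine sum_congr rfl fun i hi ↦ ?_
  have hi : (1 : ℝ) ≤ i ∧ (i : ℝ) ≤ n := by
    obtain ⟨h1, h2⟩ := mem_Icc.1 hi
    exact ⟨by exact_mod_cast h1, by exact_mod_cast h2⟩
  rw [intervalIntegral.integral_const_mul, intervalIntegral_indicator_one_mul _
    (by nlinarith) (by nlinarith) (by nlinarith), mul_left_comm, mul_integral_cos_mul]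

lemma sin_mul_int_mul_eq_neg {c c' h : ℝ} (hcc : (c + c') * h = 2 * π) (m : ℤ) :
    sin (c' * (m * h)) = -sin (c * (m * h)) := by
  rw [show c' * (m * h) = m * (2 * π) - c * (m * h) by rw [← hcc]; ring, sin_int_mul_two_pi_sub]

lemma mul_integral_stepFunction_mul_cos_of_add_mul_eq_two_pi {h c c' : ℝ} (hh : 0 ≤ h)
    (hcc : (c + c') * h = 2 * π) (n : ℕ) (u : ℕ → ℝ) :
    c' * ∫ t in 0..n * h, stepFunction h n u t * cos (c' * t) =
      -(c * ∫ t in 0..n * h, stepFunction h n u t * cos (c * t)) := by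
  rw [mul_integral_stepFunction_mul_cos hh, mul_integral_stepFunction_mul_cos hh, ← sum_neg_distrib]
  refine sum_congr rfl fun i _ ↦ ?_
  have hi := sin_mul_int_mul_eq_neg hcc i
  have hi' := sin_mul_int_mul_eq_neg hcc (i - 1)
  push_cast at hi hi'
  rw [hi, hi']
  ring

theorem fourier_coeff_reflection (T : ℝ) (hT : 0 < T) (n : ℕ) (hn : 1 ≤ n)
    (u : ℕ → ℝ)
    (uh : ℝ → ℝ)
    (huh : uh = fun t => ∑ i ∈ Finset.Icc 1 n,
      u i * Set.indicator (Set.Ioo (((i : ℝ) - 1) * (T / n)) ((i : ℝ) * (T / n))) 1 t)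
    (ubar : ℕ → ℝ)
    (hubar : ∀ k, ubar k = (2 / T) * ∫ t in (0 : ℝ)..T, uh t * Real.cos ((π / 2 + k * π) * t / T))
    (k : ℕ) (hk : k ≤ n - 1) :
    ubar (2 * n - 1 - k) = -((2 * (k : ℝ) + 1) / (4 * n - 1 - 2 * k)) * ubar k := by
  have hnk : (k : ℝ) + 1 ≤ n := by exact_mod_cast (by omega : k + 1 ≤ n)
  have hcast : ((2 * n - 1 - k : ℕ) : ℝ) = 2 * n - 1 - k := by
    rw [Nat.cast_sub (by omega), Nat.cast_sub (by omega)]; push_cast; ring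
  obtain rfl : uh = stepFunction (T / n) n u := huh
  simp_rw [hubar, hcast, mul_div_right_comm _ _ T]
  set c := (π / 2 + k * π) / T
  set c' := (π / 2 + (2 * n - 1 - k) * π) / T
  set I := fun c : ℝ ↦ ∫ t in (0 : ℝ)..T, stepFunction (T / n) n u t * cos (c * t)
  have hc' : c' ≠ 0 := (div_pos (by nlinarith [pi_pos]) hT).ne'
  have hfreq : (c + c') * (T / n) = 2 * π := by simp only [c, c']; field_simp; ring
  have haliasing : c' * I c' = -(c * I c) := by
    have := mul_integral_stepFunction_mul_cos_of_add_mul_eq_two_pi (by positivity) hfreq n u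
    rwa [mul_div_cancel₀ T (by positivity)] at this
  have hI : I c' = -(c / c') * I c := by
    field_simp
    linear_combination haliasing
  have hratio : c / c' = (2 * k + 1) / (4 * n - 1 - 2 * k) := by
    simp only [c, c']; field_simp; ring
  change 2 / T * I c' = -((2 * (k : ℝ) + 1) / (4 * n - 1 - 2 * k)) * (2 / T * I c)
  rw [← hratio, hI]
  ring
end

section
/- Let $u_h$ be piecewise constant on a uniform mesh of $(0,T)$ into $n$ elements, with cosine Fourier coefficients $\overline{u}_k$. Then $\|u_h\|_{L^2(0,T)}^2 \leq \frac{T}{2}\,\frac{\pi^2}{3}\,\sum_{k=0}^{n-1}\overline{u}_k^2$. -/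
/-!
On the `i`-th cell the cosine `cos ((k + 1/2) π t / T)` integrates to `h sinc β_k` times its value
at the midpoint, where `h = T / n` and `β_k = (2k+1)π/(4n)`. Hence
`ū_k = (2/n) sinc β_k (C u)_k`, with `C` the DCT-IV matrix `C k i = cos ((2k+1)(2i-1)π/(4n))`.
Its columns are orthogonal, `CᵀC = (n/2) I` (the sums of cosines telescope), so
`‖u_h‖² = h ∑ u_i² = (2T/n²) ∑_k (C u)_k²`. For `k < n` we have `β_k ≤ π/2`, and Jordan's inequality
`sinc β ≥ 2/π` gives `(C u)_k² ≤ (π n/4)² ū_k²`; this even yields the constant `π²/8 < π²/6`.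
-/

open Real Finset MeasureTheory

theorem sum_range_two_mul_sin_mul_cos_odd_mul (θ : ℝ) (n : ℕ) :
    ∑ k ∈ range n, 2 * sin θ * cos ((2 * k + 1) * θ) = sin (2 * n * θ) := by
  have hstep : ∀ k : ℕ,
      2 * sin θ * cos ((2 * k + 1) * θ) = sin (2 * (k + 1 : ℕ) * θ) - sin (2 * k * θ) := by
    intro k
    rw [two_mul_sin_mul_cos]
    push_cast
    rw [show θ - (2 * k + 1) * θ = -(2 * k * θ) by ring, sin_neg]
    ring_nf
  rw [sum_congr rfl fun k _ => hstep k, sum_range_sub (fun k : ℕ => sin (2 * k * θ))]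
  simp

theorem sum_range_cos_odd_mul_int_mul_pi_div_eq_zero (n : ℕ) {m : ℤ} (hm0 : m ≠ 0)
    (hm : |m| < 2 * n) : ∑ k ∈ range n, cos ((2 * k + 1) * (m * π / (2 * n))) = 0 := by
  have hn : (n : ℝ) ≠ 0 := by
    norm_cast
    rintro rfl
    exact (abs_nonneg m).not_gt (by simpa using hm)
  have hsin : sin (m * π / (2 * n)) ≠ 0 := by
    rw [Ne, sin_eq_zero_iff]
    rintro ⟨l, hl⟩
    have hml : m = 2 * n * l := by
      field_simp at hl
      exact_mod_cast (by linarith : (m : ℝ) = 2 * n * l)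
    exact hm0 (Int.eq_zero_of_abs_lt_dvd (hml ▸ dvd_mul_right _ _) hm)
  have htele := sum_range_two_mul_sin_mul_cos_odd_mul (m * π / (2 * n)) n
  rw [← mul_sum, show 2 * (n : ℝ) * (m * π / (2 * n)) = m * π by field_simp,
    sin_int_mul_pi] at htele
  simpa [hsin] using htele

noncomputable def dctCos (n k i : ℕ) : ℝ := cos ((2 * k + 1) * ((2 * i - 1) * π / (4 * n)))

theorem sum_range_dctCos_mul_dctCos {n i j : ℕ} (hi : i ∈ Icc 1 n) (hj : j ∈ Icc 1 n) :
    ∑ k ∈ range n, dctCos n k i * dctCos n k j = if i = j then (n : ℝ) / 2 else 0 := by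
  rw [mem_Icc] at hi hj
  have hn : (n : ℝ) ≠ 0 := by norm_cast; omega
  have hprod : ∀ k : ℕ, dctCos n k i * dctCos n k j =
      (cos ((2 * k + 1) * (((i - j : ℤ) : ℝ) * π / (2 * n)))
        + cos ((2 * k + 1) * (((i + j - 1 : ℤ) : ℝ) * π / (2 * n)))) / 2 := by
    intro k
    rw [dctCos, dctCos, eq_div_iff two_ne_zero, mul_comm, ← mul_assoc, two_mul_cos_mul_cos]
    congr 2 <;> push_cast <;> field_simp <;> ring
  rw [sum_congr rfl fun k _ => hprod k, ← sum_div, sum_add_distrib,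
    sum_range_cos_odd_mul_int_mul_pi_div_eq_zero n (m := i + j - 1) (by omega)
      (by rw [abs_of_pos (by omega)]; omega)]
  split_ifs with hij
  · simp [hij]
  · rw [sum_range_cos_odd_mul_int_mul_pi_div_eq_zero n (m := i - j) (by omega)
      (by rw [abs_lt]; omega)]
    simp

theorem sum_sq_sum_mul_of_orthogonal {ι κ R : Type*} [CommSemiring R] [DecidableEq ι]
    (s : Finset ι) (t : Finset κ) (c : κ → ι → R) (μ : R)
    (hc : ∀ i ∈ s, ∀ j ∈ s, ∑ k ∈ t, c k i * c k j = if i = j then μ else 0) (u : ι → R) :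
    ∑ k ∈ t, (∑ i ∈ s, u i * c k i) ^ 2 = μ * ∑ i ∈ s, u i ^ 2 := by
  calc ∑ k ∈ t, (∑ i ∈ s, u i * c k i) ^ 2
      = ∑ i ∈ s, ∑ j ∈ s, u i * u j * ∑ k ∈ t, c k i * c k j := by
        simp_rw [sq, sum_mul_sum, mul_sum]
        rw [sum_comm]
        refine sum_congr rfl fun i _ => ?_
        rw [sum_comm]
        exact sum_congr rfl fun j _ => sum_congr rfl fun k _ => by ring
    _ = ∑ i ∈ s, μ * u i ^ 2 := by
        refine sum_congr rfl fun i hi => ?_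
        rw [sum_congr rfl fun j hj => by rw [hc i hi j hj]]
        simp [mul_ite, hi, sq, mul_comm]
    _ = μ * ∑ i ∈ s, u i ^ 2 := (mul_sum ..).symm

def cell (h : ℝ) (i : ℕ) : Set ℝ := Set.Ioo ((i - 1) * h) (i * h)

theorem disjoint_cell (h : ℝ) {i j : ℕ} (hij : i ≠ j) : Disjoint (cell h i) (cell h j) := by
  rw [Set.disjoint_left]
  rintro t ⟨hi₁, hi₂⟩ ⟨hj₁, hj₂⟩
  rcases Nat.lt_or_gt_of_ne hij with hlt | hlt
  · have : (i : ℝ) ≤ j - 1 := by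
      have : (i : ℝ) + 1 ≤ j := by exact_mod_cast hlt
      linarith
    nlinarith
  · have : (j : ℝ) ≤ i - 1 := by
      have : (j : ℝ) + 1 ≤ i := by exact_mod_cast hlt
      linarith
    nlinarith

theorem sq_sum_mul_indicator_cell (h : ℝ) (s : Finset ℕ) (u : ℕ → ℝ) (t : ℝ) :
    (∑ i ∈ s, u i * (cell h i).indicator 1 t) ^ 2
      = ∑ i ∈ s, u i ^ 2 * (cell h i).indicator 1 t := by
  rw [sq, sum_mul_sum]
  refine sum_congr rfl fun i hi => ?_
  rw [sum_eq_single_of_mem i hi fun j _ hji => ?_]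
  · by_cases ht : t ∈ cell h i <;> simp [ht, sq]
  · by_cases ht : t ∈ cell h i
    · simp [Set.indicator_of_notMem ((disjoint_cell h hji).symm.notMem_of_mem_left ht)]
    · simp [ht]

theorem intervalIntegral.integral_indicator_Ioo {a b p q : ℝ} (hap : a ≤ p) (hpq : p ≤ q)
    (hqb : q ≤ b) (g : ℝ → ℝ) : ∫ t in a..b, (Set.Ioo p q).indicator g t = ∫ t in p..q, g t := by
  rw [intervalIntegral.integral_of_le (hap.trans (hpq.trans hqb)),
    intervalIntegral.integral_of_le hpq, MeasureTheory.integral_indicator measurableSet_Ioo,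
    Measure.restrict_restrict measurableSet_Ioo,
    Set.inter_eq_left.mpr (Set.Ioo_subset_Ioc_self.trans (Set.Ioc_subset_Ioc hap hqb)),
    integral_Ioc_eq_integral_Ioo]

theorem integral_sum_mul_indicator_cell_mul {T : ℝ} (hT : 0 ≤ T) (n : ℕ) (u : ℕ → ℝ)
    {g : ℝ → ℝ} (hg : Continuous g) :
    ∫ t in (0 : ℝ)..T, (∑ i ∈ Icc 1 n, u i * (cell (T / n) i).indicator 1 t) * g t
      = ∑ i ∈ Icc 1 n, u i * ∫ t in ((i : ℝ) - 1) * (T / n)..i * (T / n), g t := by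
  have hint : ∀ i, IntervalIntegrable ((cell (T / n) i).indicator g) volume 0 T := fun i =>
    ⟨(hg.intervalIntegrable 0 T).1.indicator measurableSet_Ioo,
      (hg.intervalIntegrable 0 T).2.indicator measurableSet_Ioo⟩
  have hterm : ∀ i t, u i * (cell (T / n) i).indicator 1 t * g t
      = u i * (cell (T / n) i).indicator g t := by
    intro i t
    by_cases ht : t ∈ cell (T / n) i <;> simp [ht]
  simp_rw [sum_mul, hterm]
  rw [intervalIntegral.integral_finsetSum fun i _ => (hint i).const_mul (u i)]
  refine sum_congr rfl fun i hi => ?_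
  rw [mem_Icc] at hi
  have hi₁ : (1 : ℝ) ≤ i := by exact_mod_cast hi.1
  have hin : (i : ℝ) * (T / n) ≤ T := by
    rw [mul_div_assoc']
    exact div_le_of_le_mul₀ (Nat.cast_nonneg n) hT
      (by nlinarith [show (i : ℝ) ≤ n by exact_mod_cast hi.2])
  rw [intervalIntegral.integral_const_mul, cell, intervalIntegral.integral_indicator_Ioo
    (by positivity) (by nlinarith [div_nonneg hT (Nat.cast_nonneg n)]) hin]

theorem integral_sq_sum_mul_indicator_cell {T : ℝ} (hT : 0 ≤ T) (n : ℕ) (u : ℕ → ℝ) :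
    ∫ t in (0 : ℝ)..T, (∑ i ∈ Icc 1 n, u i * (cell (T / n) i).indicator 1 t) ^ 2
      = T / n * ∑ i ∈ Icc 1 n, u i ^ 2 := by
  have h := integral_sum_mul_indicator_cell_mul hT n (fun i => u i ^ 2) (g := fun _ => 1)
    continuous_const
  simp only [mul_one, intervalIntegral.integral_const, smul_eq_mul] at h
  simp_rw [sq_sum_mul_indicator_cell, h, mul_sum]
  exact sum_congr rfl fun i _ => by ring

theorem integral_cos_mul (c x y : ℝ) (hc : c ≠ 0) :
    ∫ t in x..y, cos (c * t) = 2 / c * sin (c * (y - x) / 2) * cos (c * (x + y) / 2) := by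
  rw [intervalIntegral.integral_comp_mul_left _ hc, integral_cos, smul_eq_mul, sin_sub_sin]
  field_simp
  ring_nf

theorem two_div_mul_integral_sum_mul_indicator_cell_mul_cos {T : ℝ} (hT : 0 < T) (n : ℕ)
    (u : ℕ → ℝ) (k : ℕ) :
    2 / T * ∫ t in (0 : ℝ)..T,
        (∑ i ∈ Icc 1 n, u i * (cell (T / n) i).indicator 1 t) * cos ((π / 2 + k * π) * t / T)
      = 2 / n * sinc ((2 * k + 1) * π / (4 * n)) * ∑ i ∈ Icc 1 n, u i * dctCos n k i := by
  simp_rw [mul_div_right_comm _ _ T]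
  have hc : (π / 2 + k * π) / T ≠ 0 := by positivity
  rw [integral_sum_mul_indicator_cell_mul hT.le n u (by fun_prop), mul_sum, mul_sum]
  refine sum_congr rfl fun i hi => ?_
  have hn : (n : ℝ) ≠ 0 := by rw [mem_Icc] at hi; norm_cast; omega
  have hhalf : (π / 2 + k * π) / T * (i * (T / n) - (i - 1) * (T / n)) / 2
      = (2 * k + 1) * π / (4 * n) := by field_simp; ring
  have hmid : (π / 2 + k * π) / T * ((i - 1) * (T / n) + i * (T / n)) / 2
      = (2 * k + 1) * ((2 * i - 1) * π / (4 * n)) := by field_simp; ring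
  rw [integral_cos_mul _ _ _ hc, hhalf, hmid, dctCos, sinc_of_ne_zero (by positivity)]
  field_simp
  ring

theorem one_le_pi_div_two_mul_sinc {x : ℝ} (hx0 : 0 < x) (hx : x ≤ π / 2) :
    1 ≤ π / 2 * sinc x := by
  have hjordan := mul_le_sin hx0.le hx
  rw [sinc_of_ne_zero hx0.ne', mul_div_assoc', le_div_iff₀ hx0]
  calc 1 * x = π / 2 * (2 / π * x) := by field_simp
    _ ≤ π / 2 * sin x := by gcongr

theorem norm_bound_n (T : ℝ) (hT : 0 < T) (n : ℕ) (hn : 1 ≤ n)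
    (u : ℕ → ℝ)
    (uh : ℝ → ℝ)
    (huh : uh = fun t => ∑ i ∈ Finset.Icc 1 n,
      u i * Set.indicator (Set.Ioo (((i : ℝ) - 1) * (T / n)) ((i : ℝ) * (T / n))) 1 t)
    (ubar : ℕ → ℝ)
    (hubar : ∀ k, ubar k = (2 / T) * ∫ t in (0 : ℝ)..T, uh t * Real.cos ((π / 2 + k * π) * t / T)) :
    (∫ t in (0 : ℝ)..T, (uh t) ^ 2) ≤ T / 2 * (π ^ 2 / 3) * ∑ k ∈ Finset.range n, (ubar k) ^ 2 := by
  have hn0 : (n : ℝ) ≠ 0 := Nat.cast_ne_zero.mpr (Nat.one_le_iff_ne_zero.mp hn)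
  set S : ℕ → ℝ := fun k => ∑ i ∈ Icc 1 n, u i * dctCos n k i
  have hnorm : ∫ t in (0 : ℝ)..T, uh t ^ 2 = T / n * ∑ i ∈ Icc 1 n, u i ^ 2 := by
    rw [huh]
    exact integral_sq_sum_mul_indicator_cell hT.le n u
  have hcoef : ∀ k, ubar k = 2 / n * sinc ((2 * k + 1) * π / (4 * n)) * S k := by
    intro k
    rw [hubar, huh]
    exact two_div_mul_integral_sum_mul_indicator_cell_mul_cos hT n u k
  have hparseval : ∑ k ∈ range n, S k ^ 2 = n / 2 * ∑ i ∈ Icc 1 n, u i ^ 2 :=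
    sum_sq_sum_mul_of_orthogonal _ _ _ _ (fun _ hi _ hj => sum_range_dctCos_mul_dctCos hi hj) u
  have hS : ∀ k ∈ range n, S k ^ 2 ≤ (π * n / 4) ^ 2 * ubar k ^ 2 := by
    intro k hkn
    have hk : (2 * k + 1 : ℝ) ≤ 2 * n := by
      rw [mem_range] at hkn
      exact_mod_cast (by omega : 2 * k + 1 ≤ 2 * n)
    have hsinc := one_le_pi_div_two_mul_sinc (x := (2 * k + 1) * π / (4 * n)) (by positivity)
      (by rw [div_le_div_iff₀ (by positivity) two_pos]; nlinarith [pi_pos])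
    calc S k ^ 2 ≤ (π / 2 * sinc ((2 * k + 1) * π / (4 * n))) ^ 2 * S k ^ 2 :=
          le_mul_of_one_le_left (sq_nonneg _) (one_le_pow₀ hsinc)
      _ = (π * n / 4) ^ 2 * ubar k ^ 2 := by
          rw [hcoef]
          field_simp
          ring
  calc ∫ t in (0 : ℝ)..T, uh t ^ 2
      = 2 * T / n ^ 2 * ∑ k ∈ range n, S k ^ 2 := by
        rw [hnorm, hparseval]
        field_simp
    _ ≤ 2 * T / n ^ 2 * ∑ k ∈ range n, (π * n / 4) ^ 2 * ubar k ^ 2 :=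
        mul_le_mul_of_nonneg_left (sum_le_sum hS) (by positivity)
    _ = T * π ^ 2 / 8 * ∑ k ∈ range n, ubar k ^ 2 := by
        rw [← mul_sum]
        field_simp
        ring
    _ ≤ T / 2 * (π ^ 2 / 3) * ∑ k ∈ range n, ubar k ^ 2 := by
        gcongr
        nlinarith [mul_pos hT (pow_pos pi_pos 2)]
end

section
/- Let $u \in H^2(0,T)$, let $0 = t_0 < \cdots < t_n = T$ be a uniform mesh with $h = T/n$, and define $u^2(t) := -\frac{1}{2h}\int_{t_{i-1}}^{t_i}\widetilde{G}(s,t)\,u''(s)\,ds$ for $t \in (t_{i-1},t_i)$, where $\widetilde{G}(s,t) = (s-t_{i-1})^2 - h(2t-t_{i-1}-t_i)$ for $s < t$ and $\widetilde{G}(s,t) = (s-t_i)^2$ for $s > t$. Then $\|u^2\|_{L^2(0,T)} \leq \frac{1}{3}h^2\|u''\|_{L^2(0,T)}$. -/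
/-!
On an element `(a, b)` of length `h`, `u2 t` is `-1/(2h)` times the pairing of `u''` with the
kernel `s ↦ G̃(s, t)`, so Cauchy–Schwarz gives `u2(t)² ≤ ‖G̃(·, t)‖² ‖u''‖² / (4h²)`. The kernel is
continuous and piecewise polynomial in `s`, and `∫∫ G̃² = 2h⁶/15` over the element, so
`‖u2‖² ≤ h⁴/30 ‖u''‖²` on every element. Summing over the elements and using `1/30 ≤ 1/9` gives
the estimate.
-/

open Real MeasureTheory intervalIntegral Finset

theorem MeasureTheory.sq_integral_mul_le {α : Type*} [MeasurableSpace α]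
    {μ : Measure α} {f g : α → ℝ} (hf : Integrable (fun x => f x ^ 2) μ)
    (hg : Integrable (fun x => g x ^ 2) μ) :
    (∫ x, f x * g x ∂μ) ^ 2 ≤ (∫ x, f x ^ 2 ∂μ) * ∫ x, g x ^ 2 ∂μ := by
  by_cases hfg : Integrable (fun x => f x * g x) μ
  swap
  · rw [integral_undef hfg, zero_pow two_ne_zero]
    exact mul_nonneg (integral_nonneg fun x => sq_nonneg _) (integral_nonneg fun x => sq_nonneg _)
  -- the quadratic `r ↦ ∫ (r f + g)²` is nonnegative, so its discriminant is not positive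
  have hquad : ∀ r : ℝ, 0 ≤ (∫ x, f x ^ 2 ∂μ) * (r * r) + 2 * (∫ x, f x * g x ∂μ) * r
      + ∫ x, g x ^ 2 ∂μ := by
    intro r
    have hexpand : ∫ x, (r * f x + g x) ^ 2 ∂μ = (∫ x, f x ^ 2 ∂μ) * (r * r)
        + 2 * (∫ x, f x * g x ∂μ) * r + ∫ x, g x ^ 2 ∂μ := by
      have hfun : (fun x => (r * f x + g x) ^ 2)
          = fun x => r * r * f x ^ 2 + (2 * r * (f x * g x) + g x ^ 2) := by
        funext x; ring
      rw [hfun, integral_add (hf.const_mul _) ((hfg.const_mul _).fun_add hg),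
        integral_add (hfg.const_mul _) hg, MeasureTheory.integral_const_mul,
        MeasureTheory.integral_const_mul]
      ring
    rw [← hexpand]
    exact integral_nonneg fun x => sq_nonneg _
  have := discrim_le_zero hquad
  rw [discrim] at this
  nlinarith

theorem intervalIntegral.sq_integral_mul_le {a b : ℝ} (hab : a ≤ b) {f g : ℝ → ℝ}
    (hf : IntervalIntegrable (fun x => f x ^ 2) volume a b)
    (hg : IntervalIntegrable (fun x => g x ^ 2) volume a b) :
    (∫ x in a..b, f x * g x) ^ 2 ≤ (∫ x in a..b, f x ^ 2) * ∫ x in a..b, g x ^ 2 := by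
  simp only [integral_of_le hab]
  exact MeasureTheory.sq_integral_mul_le hf.1 hg.1

theorem intervalIntegral.integral_mono_on_Ioo_of_nonneg {a b : ℝ} (hab : a ≤ b) {f g : ℝ → ℝ}
    (hf : ∀ x, 0 ≤ f x) (hg : IntervalIntegrable g volume a b)
    (hfg : ∀ x ∈ Set.Ioo a b, f x ≤ g x) :
    ∫ x in a..b, f x ≤ ∫ x in a..b, g x := by
  simp only [integral_of_le hab, integral_Ioc_eq_integral_Ioo]
  exact integral_mono_of_nonneg (ae_of_all _ hf) (hg.1.mono_set Set.Ioo_subset_Ioc_self)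
    (ae_restrict_of_forall_mem measurableSet_Ioo hfg)

/-- `elementKernel a b h t s` is `G̃(s, t)` on the element `(a, b) = (tᵢ₋₁, tᵢ)` with `h = b - a`. -/
noncomputable def elementKernel (a b h t s : ℝ) : ℝ :=
  if s < t then (s - a) ^ 2 - h * (2 * t - a - b) else (s - b) ^ 2

/-- The value of `∫ s in a..b, elementKernel a b h (a + x) s ^ 2` for `0 ≤ x ≤ h`. -/
noncomputable def elementKernelSqIntegral (h x : ℝ) : ℝ :=
  x ^ 5 / 5 - 2 * h * (2 * x - h) * x ^ 3 / 3 + (h * (2 * x - h)) ^ 2 * x + (h - x) ^ 5 / 5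

section ElementKernel

variable {a b h : ℝ}

theorem elementKernel_eq_of_le (hb : b = a + h) {t s : ℝ} (hst : s ≤ t) :
    elementKernel a b h t s = (s - a) ^ 2 - h * (2 * t - a - b) := by
  rcases hst.lt_or_eq with hst | rfl
  · simp [elementKernel, hst]
  · simp only [elementKernel, lt_irrefl, if_false]
    subst hb
    ring

theorem elementKernel_eq_of_ge {t s : ℝ} (hts : t ≤ s) :
    elementKernel a b h t s = (s - b) ^ 2 := by
  simp [elementKernel, not_lt.2 hts]

theorem continuous_elementKernel (hb : b = a + h) (t : ℝ) :
    Continuous (elementKernel a b h t) := by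
  have : elementKernel a b h t =
      fun s => if s ≤ t then (s - a) ^ 2 - h * (2 * t - a - b) else (s - b) ^ 2 := by
    funext s
    rcases le_or_gt s t with hst | hts
    · simp [elementKernel_eq_of_le hb hst, hst]
    · simp [elementKernel_eq_of_ge hts.le, not_le.2 hts]
  rw [this]
  refine Continuous.if_le (by fun_prop) (by fun_prop) continuous_id continuous_const ?_
  rintro s rfl
  subst hb
  ring

theorem integral_elementKernel_sq (hb : b = a + h) {t : ℝ} (hat : a ≤ t) (htb : t ≤ b) :
    ∫ s in a..b, elementKernel a b h t s ^ 2 = elementKernelSqIntegral h (t - a) := by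
  have hK : Continuous fun s => elementKernel a b h t s ^ 2 :=
    (continuous_elementKernel hb t).pow 2
  rw [← integral_add_adjacent_intervals (hK.intervalIntegrable a t) (hK.intervalIntegrable t b)]
  have hleft : ∫ s in a..t, elementKernel a b h t s ^ 2
      = ∫ s in a..t, ((s - a) ^ 2 - h * (2 * t - a - b)) ^ 2 := by
    refine integral_congr fun s hs => ?_
    rw [Set.uIcc_of_le hat] at hs
    simp only [elementKernel_eq_of_le hb hs.2]
  have hright : ∫ s in t..b, elementKernel a b h t s ^ 2 = ∫ s in t..b, (s - b) ^ 4 := by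
    refine integral_congr fun s hs => ?_
    rw [Set.uIcc_of_le htb] at hs
    simp only [elementKernel_eq_of_ge hs.1]
    ring
  rw [hleft, hright, integral_comp_sub_right (fun x => (x ^ 2 - h * (2 * t - a - b)) ^ 2),
    integral_comp_sub_right (fun x => x ^ 4)]
  have hexpand : (fun x : ℝ => (x ^ 2 - h * (2 * t - a - b)) ^ 2)
      = fun x => x ^ 4 - 2 * (h * (2 * t - a - b)) * x ^ 2 + (h * (2 * t - a - b)) ^ 2 := by
    funext x; ring
  simp (disch := exact Continuous.intervalIntegrable (by fun_prop) _ _) only [hexpand,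
    intervalIntegral.integral_add, intervalIntegral.integral_sub,
    intervalIntegral.integral_const_mul, integral_pow, intervalIntegral.integral_const, smul_eq_mul]
  subst hb
  simp only [elementKernelSqIntegral]
  ring

theorem integral_elementKernelSqIntegral (h : ℝ) :
    ∫ x in (0 : ℝ)..h, elementKernelSqIntegral h x = 2 / 15 * h ^ 6 := by
  have hexpand : elementKernelSqIntegral h = fun x =>
      x ^ 5 / 5 - 4 * h / 3 * x ^ 4 + 14 * h ^ 2 / 3 * x ^ 3 - 4 * h ^ 3 * x ^ 2 + h ^ 4 * x ^ 1
        + (h - x) ^ 5 / 5 := by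
    funext x; simp only [elementKernelSqIntegral]; ring
  simp (disch := exact Continuous.intervalIntegrable (by fun_prop) _ _) only [hexpand,
    intervalIntegral.integral_add, intervalIntegral.integral_sub,
    intervalIntegral.integral_const_mul, intervalIntegral.integral_div, integral_pow,
    intervalIntegral.integral_comp_sub_left (fun x => x ^ 5 / 5)]
  ring

end ElementKernel

theorem intervalIntegral.integral_le_mul_integral_of_subintervals {f g : ℝ → ℝ} {a : ℕ → ℝ}
    {C : ℝ} {n : ℕ} (ha : Monotone a) (hf : ∀ x, 0 ≤ f x)
    (hg : IntervalIntegrable g volume (a 0) (a n))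
    (hfg : ∀ k < n, ∫ x in a k..a (k + 1), f x ≤ C * ∫ x in a k..a (k + 1), g x) :
    ∫ x in a 0..a n, f x ≤ C * ∫ x in a 0..a n, g x := by
  have hsub : ∀ k < n, Set.uIcc (a k) (a (k + 1)) ⊆ Set.uIcc (a 0) (a n) := fun k hk =>
    Set.uIcc_subset_uIcc (Set.mem_uIcc_of_le (ha k.zero_le) (ha hk.le))
      (Set.mem_uIcc_of_le (ha (k + 1).zero_le) (ha hk))
  have hsplit : ∫ x in a 0..a n, f x ≤ ∑ k ∈ range n, ∫ x in a k..a (k + 1), f x := by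
    by_cases hfi : IntervalIntegrable f volume (a 0) (a n)
    · exact (sum_integral_adjacent_intervals fun k hk => hfi.mono_set (hsub k hk)).ge
    · rw [integral_undef hfi]
      exact sum_nonneg fun k _ => integral_nonneg (ha k.le_succ) fun x _ => hf x
  calc ∫ x in a 0..a n, f x ≤ ∑ k ∈ range n, ∫ x in a k..a (k + 1), f x := hsplit
    _ ≤ ∑ k ∈ range n, C * ∫ x in a k..a (k + 1), g x :=
      sum_le_sum fun k hk => hfg k (mem_range.1 hk)
    _ = C * ∫ x in a 0..a n, g x := by
      rw [← mul_sum, sum_integral_adjacent_intervals fun k hk => hg.mono_set (hsub k hk)]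

theorem integral_sq_le_of_eq_integral_elementKernel_mul {a b h : ℝ} (hh : 0 < h)
    (hb : b = a + h) {f g : ℝ → ℝ} (hf : IntervalIntegrable (fun s => f s ^ 2) volume a b)
    (hg : ∀ t ∈ Set.Ioo a b, g t = -(1 / (2 * h)) * ∫ s in a..b, elementKernel a b h t s * f s) :
    ∫ t in a..b, g t ^ 2 ≤ h ^ 4 / 30 * ∫ s in a..b, f s ^ 2 := by
  have hab : a ≤ b := by rw [hb]; linarith
  have hpointwise : ∀ t ∈ Set.Ioo a b, g t ^ 2 ≤
      (1 / (2 * h)) ^ 2 * (elementKernelSqIntegral h (t - a) * ∫ s in a..b, f s ^ 2) := by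
    intro t ht
    rw [hg t ht, mul_pow, neg_sq, ← integral_elementKernel_sq hb ht.1.le ht.2.le]
    gcongr
    exact intervalIntegral.sq_integral_mul_le hab
      (((continuous_elementKernel hb t).pow 2).intervalIntegrable a b) hf
  have hcont : Continuous (elementKernelSqIntegral h) := by
    unfold elementKernelSqIntegral; fun_prop
  calc ∫ t in a..b, g t ^ 2
      ≤ ∫ t in a..b,
          (1 / (2 * h)) ^ 2 * (elementKernelSqIntegral h (t - a) * ∫ s in a..b, f s ^ 2) :=
        integral_mono_on_Ioo_of_nonneg hab (fun t => sq_nonneg (g t))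
          (Continuous.intervalIntegrable (by fun_prop) a b) hpointwise
    _ = (1 / (2 * h)) ^ 2 * (2 / 15 * h ^ 6 * ∫ s in a..b, f s ^ 2) := by
      rw [intervalIntegral.integral_const_mul, intervalIntegral.integral_mul_const,
        integral_comp_sub_right, sub_self, hb, add_sub_cancel_left,
        integral_elementKernelSqIntegral]
    _ = h ^ 4 / 30 * ∫ s in a..b, f s ^ 2 := by
      field_simp
      ring

theorem u2_estimate_general (T : ℝ) (hT : 0 < T) (n : ℕ) (hn : 1 ≤ n)
    (h : ℝ) (hh : h = T / n)
    (u'' : ℝ → ℝ)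
    (hint2 : IntervalIntegrable (fun s => (u'' s) ^ 2) volume 0 T)
    (u2 : ℝ → ℝ)
    (hu2 : ∀ i ∈ Finset.Icc 1 n, ∀ t ∈ Set.Ioo (((i : ℝ) - 1) * h) ((i : ℝ) * h),
      u2 t = -(1 / (2 * h)) * ∫ s in (((i : ℝ) - 1) * h)..((i : ℝ) * h),
        (if s < t then (s - ((i : ℝ) - 1) * h) ^ 2 - h * (2 * t - ((i : ℝ) - 1) * h - (i : ℝ) * h)
         else (s - (i : ℝ) * h) ^ 2) * u'' s) :
    Real.sqrt (∫ t in (0 : ℝ)..T, (u2 t) ^ 2) ≤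
      1 / 3 * h ^ 2 * Real.sqrt (∫ s in (0 : ℝ)..T, (u'' s) ^ 2) := by
  have hn0 : (0 : ℝ) < n := Nat.cast_pos.2 hn
  have hh0 : 0 < h := hh ▸ div_pos hT hn0
  have hTnh : T = n * h := by rw [hh]; field_simp
  have hmesh : Monotone fun k : ℕ => (k : ℝ) * h := fun _ _ hjk =>
    mul_le_mul_of_nonneg_right (Nat.cast_le.2 hjk) hh0.le
  have helement : ∀ k < n, ∫ t in (k : ℝ) * h..((k + 1 : ℕ) : ℝ) * h, u2 t ^ 2 ≤
      h ^ 4 / 30 * ∫ s in (k : ℝ) * h..((k + 1 : ℕ) : ℝ) * h, u'' s ^ 2 := by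
    intro k hk
    have hk' : k + 1 ∈ Finset.Icc 1 n := mem_Icc.2 ⟨k.succ_pos, hk⟩
    have hsub : Set.uIcc ((k : ℝ) * h) (((k + 1 : ℕ) : ℝ) * h) ⊆ Set.uIcc 0 T := by
      rw [hTnh]
      exact Set.uIcc_subset_uIcc (Set.mem_uIcc_of_le (by positivity) (hmesh hk.le))
        (Set.mem_uIcc_of_le (by positivity) (hmesh hk))
    refine integral_sq_le_of_eq_integral_elementKernel_mul hh0 (by push_cast; ring)
      (hint2.mono_set hsub) fun t ht => ?_
    have := hu2 (k + 1) hk' t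
    push_cast at this ht ⊢
    simp only [add_sub_cancel_right] at this
    exact this ht
  have key := integral_le_mul_integral_of_subintervals hmesh (fun t => sq_nonneg (u2 t))
    (by simpa [← hTnh] using hint2) helement
  simp only [Nat.cast_zero, zero_mul, ← hTnh] at key
  calc √(∫ t in (0 : ℝ)..T, u2 t ^ 2)
      ≤ √((1 / 3 * h ^ 2) ^ 2 * ∫ s in (0 : ℝ)..T, u'' s ^ 2) := by
        refine sqrt_le_sqrt (key.trans ?_)
        gcongr
        · exact integral_nonneg hT.le fun s _ => sq_nonneg _
        · nlinarith [pow_pos hh0 4]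
    _ = 1 / 3 * h ^ 2 * √(∫ s in (0 : ℝ)..T, u'' s ^ 2) := by
      rw [sqrt_mul (by positivity), sqrt_sq (by positivity)]

theorem u2_estimate (T : ℝ) (hT : 0 < T) (n : ℕ) (hn : 1 ≤ n)
    (h : ℝ) (hh : h = T / n)
    (u'' : ℝ → ℝ)
    (hint : IntervalIntegrable u'' volume 0 T)
    (hint2 : IntervalIntegrable (fun s => (u'' s) ^ 2) volume 0 T)
    (u2 : ℝ → ℝ)
    (hu2 : ∀ i ∈ Finset.Icc 1 n, ∀ t ∈ Set.Ioo (((i : ℝ) - 1) * h) ((i : ℝ) * h),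
      u2 t = -(1 / (2 * h)) * ∫ s in (((i : ℝ) - 1) * h)..((i : ℝ) * h),
        (if s < t then (s - ((i : ℝ) - 1) * h) ^ 2 - h * (2 * t - ((i : ℝ) - 1) * h - (i : ℝ) * h)
         else (s - (i : ℝ) * h) ^ 2) * u'' s) :
    Real.sqrt (∫ t in (0 : ℝ)..T, (u2 t) ^ 2) ≤
      1 / 3 * h ^ 2 * Real.sqrt (∫ s in (0 : ℝ)..T, (u'' s) ^ 2) :=
  u2_estimate_general T hT n hn h hh u'' hint2 u2 hu2
end
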